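/- Let X, Y, Z be independent nonnegative real random variables, exponentially distributed with means Ω̂_R > 0, Ω̂_B > 0, Ω_RB > 0 respectively. Let γ̄, A, G, C, D, Ω_ξ be positive real constants, define the SINR γ_F = A·X·γ̄ / (γ̄·(G·X + Ω_ξ + Z·(C·Y + D)) + 1), and let 0 < u < A/G. Then P(γ_F ≤ u) = 1 − χ₁(u)·exp(χ₃(u))·∫_{χ₂(u)}^∞ e^{−t}/t dt, where χ₁(u) = Ω̂_R·(A − u·G)/(u·Ω_RB·Ω̂_B·C), χ₂(u) = χ₁(u)·(u·Ω_RB·D/(Ω̂_R·(A − u·G)) + 1), and χ₃(u) = χ₂(u) − u·Ω_ξ/(Ω̂_R·(A − u·G)) − u/(Ω̂_R·γ̄·(A − u·G)). -/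

import Mathlib

open MeasureTheory ProbabilityTheory Set
open scoped ENNReal

noncomputable def chi1 (ΩR ΩB ΩRB A G C : ℝ) (u : ℝ) : ℝ :=
  ΩR * (A - u * G) / (u * ΩRB * ΩB * C)

noncomputable def chi2 (ΩR ΩB ΩRB A G C D : ℝ) (u : ℝ) : ℝ :=
  chi1 ΩR ΩB ΩRB A G C u * (u * ΩRB * D / (ΩR * (A - u * G)) + 1)

noncomputable def chi3 (ΩR ΩB ΩRB A G C D Ωξ snr : ℝ) (u : ℝ) : ℝ :=
  chi2 ΩR ΩB ΩRB A G C D u - u * Ωξ / (ΩR * (A - u * G))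
    - u / (ΩR * snr * (A - u * G))

section Aux

lemma integral_Ioi_comp_add_right (f : ℝ → ℝ) (a c : ℝ) :
    ∫ x in Ioi a, f (x + c) = ∫ x in Ioi (a + c), f x := by
  rw [← integral_indicator measurableSet_Ioi, ← integral_indicator measurableSet_Ioi,
    ← integral_add_right_eq_self (fun x => (Ioi (a + c)).indicator f x) c]
  congr 1; ext x
  simp only [indicator, mem_Ioi]
  by_cases h : a < x
  · rw [if_pos h, if_pos (by linarith)]
  · rw [if_neg h, if_neg (fun hh => h (by linarith))]

lemma expMeasure_eq_withDensity (r : ℝ) :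
    expMeasure r = volume.withDensity (exponentialPDF r) := rfl

lemma measurable_exponentialPDF (r : ℝ) : Measurable (exponentialPDF r) :=
  (measurable_exponentialPDFReal r).ennreal_ofReal

lemma lintegral_expMeasure {r : ℝ} (hr : 0 < r) (f : ℝ → ℝ≥0∞) (g : ℝ → ℝ)
    (hfg : ∀ x, 0 < x → f x = ENNReal.ofReal (g x))
    (hg0 : ∀ x, 0 < x → 0 ≤ g x)
    (hgi : IntegrableOn (fun x => r * Real.exp (-(r * x)) * g x) (Ioi 0)) :
    ∫⁻ x, f x ∂(expMeasure r)
      = ENNReal.ofReal (∫ x in Ioi 0, r * Real.exp (-(r * x)) * g x) := by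
  rw [expMeasure_eq_withDensity,
    lintegral_withDensity_eq_lintegral_mul_non_measurable _ (measurable_exponentialPDF r)
      (Filter.Eventually.of_forall fun x => by
        rw [exponentialPDF_eq]; exact ENNReal.ofReal_lt_top) f]
  have h1 : (fun x => (exponentialPDF r * f) x) =ᵐ[volume]
      (Ioi 0).indicator (fun x => ENNReal.ofReal (r * Real.exp (-(r * x)) * g x)) := by
    have hne : ∀ᵐ x : ℝ, x ≠ 0 := by
      rw [ae_iff]; simpa using measure_singleton (0 : ℝ)
    filter_upwards [hne] with x hx
    rcases lt_trichotomy x 0 with h | h | h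
    · simp [Pi.mul_apply, exponentialPDF_of_neg h, indicator, not_lt.mpr h.le,
        mem_Ioi, h.not_gt]
    · exact absurd h hx
    · rw [Pi.mul_apply, exponentialPDF_of_nonneg h.le, hfg x h,
        indicator_of_mem (mem_Ioi.mpr h), ← ENNReal.ofReal_mul (by positivity), mul_assoc]
  rw [lintegral_congr_ae h1, lintegral_indicator measurableSet_Ioi,
    ← ofReal_integral_eq_lintegral_ofReal hgi
      (ae_restrict_of_forall_mem measurableSet_Ioi fun x hx => by
        have := hg0 x hx; positivity)]

lemma expMeasure_Ioi {r : ℝ} (hr : 0 < r) {t : ℝ} (ht : 0 ≤ t) :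
    expMeasure r (Ioi t) = ENNReal.ofReal (Real.exp (-(r * t))) := by
  haveI := isProbabilityMeasure_expMeasure hr
  have hIic : expMeasure r (Iic t) = ENNReal.ofReal (1 - Real.exp (-(r * t))) := by
    rw [expMeasure_eq_withDensity, withDensity_apply _ measurableSet_Iic]
    rw [lintegral_exponentialPDF_eq_antiDeriv hr, if_pos ht]
  have hcompl : Ioi t = (Iic t)ᶜ := by rw [compl_Iic]
  have hexple : Real.exp (-(r * t)) ≤ 1 := by
    rw [Real.exp_le_one_iff]; exact neg_nonpos.mpr (by positivity)
  rw [hcompl, measure_compl measurableSet_Iic (measure_ne_top _ _), measure_univ, hIic,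
    ← ENNReal.ofReal_one, ← ENNReal.ofReal_sub _ (by linarith), sub_sub_cancel]

lemma map_eq_expMeasure {Ω : Type*} [MeasureSpace Ω] [IsProbabilityMeasure (ℙ : Measure Ω)]
    {W : Ω → ℝ} (hWm : Measurable W) (hW0 : ∀ ω, 0 ≤ W ω) {m : ℝ} (hm : 0 < m)
    (hT : ∀ x, 0 ≤ x → (ℙ {ω | x < W ω}).toReal = Real.exp (-x / m)) :
    Measure.map W ℙ = expMeasure m⁻¹ := by
  haveI := isProbabilityMeasure_expMeasure (inv_pos.mpr hm)
  refine MeasureTheory.Measure.ext_of_Iic _ _ (fun x => ?_)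
  rw [Measure.map_apply hWm measurableSet_Iic, expMeasure_eq_withDensity,
    withDensity_apply _ measurableSet_Iic,
    lintegral_exponentialPDF_eq_antiDeriv (inv_pos.mpr hm)]
  by_cases hx : 0 ≤ x
  · rw [if_pos hx]
    have hset : W ⁻¹' Iic x = {ω | x < W ω}ᶜ := by
      ext ω; simp [not_lt]
    have hmeas : MeasurableSet {ω | x < W ω} := measurableSet_lt measurable_const hWm
    have hP : ℙ {ω | x < W ω} = ENNReal.ofReal (Real.exp (-x / m)) := by
      rw [← hT x hx, ENNReal.ofReal_toReal (measure_ne_top _ _)]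
    have harg : -x / m = -(m⁻¹ * x) := by field_simp
    have hexple : Real.exp (-x / m) ≤ 1 := by
      rw [Real.exp_le_one_iff]; rw [neg_div]; simp [div_nonneg hx hm.le]
    rw [hset, measure_compl hmeas (measure_ne_top _ _), measure_univ, hP,
      ← ENNReal.ofReal_one, ← ENNReal.ofReal_sub _ (Real.exp_nonneg _), harg]
  · rw [if_neg hx]
    have : W ⁻¹' Iic x = ∅ := by
      ext ω; simp only [mem_preimage, mem_Iic, mem_empty_iff_false, iff_false, not_le]
      exact lt_of_lt_of_le (not_le.mp hx) (hW0 ω)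
    simp [this]

end Aux

set_option maxHeartbeats 2000000 in
/-- Lemma 1 of the paper: the CDF of the far-signal SINR
`γ_F = A·X·γ̄/(γ̄(G·X + Ω_ξ + Z(C·Y + D)) + 1)` at `0 < u < A/G` equals
`1 + χ₁(u)·Ei(-χ₂(u))·exp(χ₃(u))`, where `Ei(-x) = -∫_x^∞ e^(-t)/t dt`. -/
theorem cdf_sinr_far_closed_form
    {Ω : Type*} [MeasureSpace Ω] [IsProbabilityMeasure (ℙ : Measure Ω)]
    (X Y Z : Ω → ℝ) (hXm : Measurable X) (hYm : Measurable Y) (hZm : Measurable Z)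
    (hX0 : ∀ ω, 0 ≤ X ω) (hY0 : ∀ ω, 0 ≤ Y ω) (hZ0 : ∀ ω, 0 ≤ Z ω)
    (ΩR ΩB ΩRB : ℝ) (hΩR : 0 < ΩR) (hΩB : 0 < ΩB) (hΩRB : 0 < ΩRB)
    (hXexp : ∀ x : ℝ, 0 ≤ x → (ℙ {ω | x < X ω}).toReal = Real.exp (-x / ΩR))
    (hYexp : ∀ y : ℝ, 0 ≤ y → (ℙ {ω | y < Y ω}).toReal = Real.exp (-y / ΩB))
    (hZexp : ∀ z : ℝ, 0 ≤ z → (ℙ {ω | z < Z ω}).toReal = Real.exp (-z / ΩRB))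
    (hindep : iIndepFun ![X, Y, Z] ℙ)
    (snr A G C D Ωξ : ℝ) (hsnr : 0 < snr) (hA : 0 < A) (hG : 0 < G)
    (hC : 0 < C) (hD : 0 < D) (hΩξ : 0 < Ωξ)
    (u : ℝ) (hu0 : 0 < u) (hu : u < A / G) :
    (ℙ {ω | A * X ω * snr /
        (snr * (G * X ω + Ωξ + Z ω * (C * Y ω + D)) + 1) ≤ u}).toReal
      = 1 - chi1 ΩR ΩB ΩRB A G C u * Real.exp (chi3 ΩR ΩB ΩRB A G C D Ωξ snr u) *
          ∫ t in Ioi (chi2 ΩR ΩB ΩRB A G C D u), Real.exp (-t) / t := by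
  have hAG : 0 < A - u * G := by
    have := (lt_div_iff₀ hG).mp hu; linarith
  set k : ℝ := u / (ΩR * (A - u * G)) with hk
  have hk0 : 0 < k := by positivity
  set χ₁ := chi1 ΩR ΩB ΩRB A G C u with hχ₁
  set χ₂ := chi2 ΩR ΩB ΩRB A G C D u with hχ₂
  set χ₃ := chi3 ΩR ΩB ΩRB A G C D Ωξ snr u with hχ₃
  set I := ∫ t in Ioi χ₂, Real.exp (-t) / t with hI
  set s : ℝ := k * ΩRB * C * ΩB with hs
  have hs0 : 0 < s := by positivity
  have hχ₁s : χ₁ = s⁻¹ := by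
    rw [hχ₁, chi1, hs, hk]; field_simp
  have hχ₁0 : 0 < χ₁ := by rw [hχ₁s]; positivity
  have hχ₂s : s * χ₂ = 1 + k * ΩRB * D := by
    rw [hχ₂, chi2, ← hχ₁, hχ₁s, hk]; field_simp; ring
  have hχ₂0 : 0 < χ₂ := by
    rw [hχ₂, chi2, ← hχ₁]
    have h1 : 0 < u * ΩRB * D / (ΩR * (A - u * G)) :=
      div_pos (by positivity) (mul_pos hΩR hAG)
    exact mul_pos hχ₁0 (by linarith)
  set gf : ℝ × ℝ → ℝ :=
    fun p => (u * (Ωξ + p.2 * (C * p.1 + D)) + u / snr) / (A - u * G) with hgf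
  have hgfm : Measurable gf := by fun_prop
  set c₀ : ℝ := Real.exp (-(k * Ωξ + k / snr)) with hc₀
  have hc₀0 : 0 < c₀ := Real.exp_pos _
  clear_value k χ₁ χ₂ χ₃ I s gf c₀
  -- Step A : set equality
  have hseteq : {ω | A * X ω * snr / (snr * (G * X ω + Ωξ + Z ω * (C * Y ω + D)) + 1) ≤ u}
      = {ω | gf (Y ω, Z ω) < X ω}ᶜ := by
    ext ω
    simp only [mem_setOf_eq, mem_compl_iff, not_lt, hgf]
    have hx := hX0 ω; have hy := hY0 ω; have hz := hZ0 ω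
    have hzy : 0 ≤ Z ω * (C * Y ω + D) := by positivity
    have hgx : 0 ≤ G * X ω := by positivity
    have hden : 0 < snr * (G * X ω + Ωξ + Z ω * (C * Y ω + D)) + 1 := by nlinarith
    rw [div_le_iff₀ hden, le_div_iff₀ hAG]
    have key : u * (snr * (G * X ω + Ωξ + Z ω * (C * Y ω + D)) + 1) - A * X ω * snr
        = snr * ((u * (Ωξ + Z ω * (C * Y ω + D)) + u / snr) - X ω * (A - u * G)) := by
      field_simp; ring
    constructor
    · intro h
      have h2 : 0 ≤ snr * ((u * (Ωξ + Z ω * (C * Y ω + D)) + u / snr) - X ω * (A - u * G)) := by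
        rw [← key]; linarith
      have h3 := (mul_nonneg_iff_of_pos_left hsnr).mp h2
      linarith
    · intro h
      have h2 : 0 ≤ (u * (Ωξ + Z ω * (C * Y ω + D)) + u / snr) - X ω * (A - u * G) := by
        linarith
      have h3 := mul_nonneg hsnr.le h2
      rw [← key] at h3
      linarith
  -- measurability of the event
  have hE : MeasurableSet {ω | gf (Y ω, Z ω) < X ω} :=
    measurableSet_lt (hgfm.comp (hYm.prodMk hZm)) hXm
  -- laws
  have hmapX : Measure.map X ℙ = expMeasure ΩR⁻¹ := map_eq_expMeasure hXm hX0 hΩR hXexp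
  have hmapY : Measure.map Y ℙ = expMeasure ΩB⁻¹ := map_eq_expMeasure hYm hY0 hΩB hYexp
  have hmapZ : Measure.map Z ℙ = expMeasure ΩRB⁻¹ := map_eq_expMeasure hZm hZ0 hΩRB hZexp
  haveI iX := isProbabilityMeasure_expMeasure (inv_pos.mpr hΩR)
  haveI iY := isProbabilityMeasure_expMeasure (inv_pos.mpr hΩB)
  haveI iZ := isProbabilityMeasure_expMeasure (inv_pos.mpr hΩRB)
  -- independence
  have hmeasvec : ∀ i, Measurable (![X, Y, Z] i) := by
    intro i; fin_cases i <;> simpa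
  have hindYZX : IndepFun (fun ω => (Y ω, Z ω)) X ℙ := by
    have h := hindep.indepFun_prodMk hmeasvec 1 2 0 (by decide) (by decide)
    simpa using h
  have hindYZ : IndepFun Y Z ℙ := by
    have h := hindep.indepFun (i := 1) (j := 2) (by decide)
    simpa using h
  have hW : Measurable (fun ω => (Y ω, Z ω)) := hYm.prodMk hZm
  have hmapW : Measure.map (fun ω => (Y ω, Z ω)) ℙ
      = (expMeasure ΩB⁻¹).prod (expMeasure ΩRB⁻¹) := by
    rw [(indepFun_iff_map_prod_eq_prod_map_map hYm.aemeasurable hZm.aemeasurable).mp hindYZ,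
      hmapY, hmapZ]
  have hS : MeasurableSet {p : (ℝ × ℝ) × ℝ | gf p.1 < p.2} :=
    measurableSet_lt (hgfm.comp measurable_fst) measurable_snd
  -- the probability of the tail event as a double integral
  have htail : Antitone (fun t : ℝ => expMeasure ΩR⁻¹ (Ioi t)) :=
    fun t t' h => measure_mono (Ioi_subset_Ioi h)
  have hPE : ℙ {ω | gf (Y ω, Z ω) < X ω}
      = ∫⁻ y, (∫⁻ z, expMeasure ΩR⁻¹ (Ioi (gf (y, z))) ∂(expMeasure ΩRB⁻¹))
          ∂(expMeasure ΩB⁻¹) := by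
    have hpair : Measure.map (fun ω => ((Y ω, Z ω), X ω)) ℙ
        = (Measure.map (fun ω => (Y ω, Z ω)) ℙ).prod (Measure.map X ℙ) :=
      (indepFun_iff_map_prod_eq_prod_map_map hW.aemeasurable hXm.aemeasurable).mp hindYZX
    have hev : {ω | gf (Y ω, Z ω) < X ω}
        = (fun ω => ((Y ω, Z ω), X ω)) ⁻¹' {p : (ℝ × ℝ) × ℝ | gf p.1 < p.2} := rfl
    rw [hev, ← Measure.map_apply (hW.prodMk hXm) hS, hpair, hmapW, hmapX,
      Measure.prod_apply hS]
    have hmm : AEMeasurable (fun w : ℝ × ℝ => expMeasure ΩR⁻¹ (Ioi (gf w)))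
        ((expMeasure ΩB⁻¹).prod (expMeasure ΩRB⁻¹)) :=
      (htail.measurable.comp hgfm).aemeasurable
    rw [show (fun w : ℝ × ℝ => expMeasure ΩR⁻¹ (Prod.mk w ⁻¹' {p : (ℝ × ℝ) × ℝ | gf p.1 < p.2}))
        = fun w : ℝ × ℝ => expMeasure ΩR⁻¹ (Ioi (gf w)) from rfl,
      lintegral_prod _ hmm]
  -- inner integral
  have hinner : ∀ y : ℝ, 0 < y →
      (∫⁻ z, expMeasure ΩR⁻¹ (Ioi (gf (y, z))) ∂(expMeasure ΩRB⁻¹))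
      = ENNReal.ofReal (c₀ / (1 + k * ΩRB * (C * y + D))) := by
    intro y hy
    set a : ℝ := k * (C * y + D) with ha
    have ha0 : 0 < a := by positivity
    have hb0 : 0 < ΩRB⁻¹ + a := by positivity
    have hfg1 : ∀ z : ℝ, 0 < z → expMeasure ΩR⁻¹ (Ioi (gf (y, z)))
        = ENNReal.ofReal (c₀ * Real.exp (-(a * z))) := by
      intro z hz
      have hg0 : 0 ≤ gf (y, z) := by
        rw [hgf]
        have h1 : 0 ≤ z * (C * y + D) := by positivity
        have h2 : 0 < u / snr := by positivity
        positivity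
      rw [expMeasure_Ioi (inv_pos.mpr hΩR) hg0, hc₀, ← Real.exp_add]
      congr 1
      rw [hgf, ha, hk]
      field_simp
      ring
    have hptw : ∀ z : ℝ, ΩRB⁻¹ * Real.exp (-(ΩRB⁻¹ * z)) * (c₀ * Real.exp (-(a * z)))
        = ΩRB⁻¹ * c₀ * Real.exp (-((ΩRB⁻¹ + a) * z)) := by
      intro z
      rw [show -((ΩRB⁻¹ + a) * z) = -(ΩRB⁻¹ * z) + -(a * z) by ring, Real.exp_add]
      ring
    have hint2 : (∫ z in Ioi 0, Real.exp (-((ΩRB⁻¹ + a) * z))) = (ΩRB⁻¹ + a)⁻¹ := by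
      have h := integral_comp_mul_left_Ioi (fun t => Real.exp (-t)) 0 hb0
      rw [mul_zero, integral_exp_neg_Ioi_zero, smul_eq_mul, mul_one] at h
      exact h
    rw [lintegral_expMeasure (inv_pos.mpr hΩRB) _
        (fun z => c₀ * Real.exp (-(a * z))) hfg1
        (fun z hz => by positivity) ?_]
    · have : (∫ z in Ioi 0, ΩRB⁻¹ * Real.exp (-(ΩRB⁻¹ * z)) * (c₀ * Real.exp (-(a * z))))
          = ΩRB⁻¹ * c₀ * (ΩRB⁻¹ + a)⁻¹ := by
        simp_rw [hptw]
        rw [integral_const_mul, hint2]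
      rw [this]
      have hd : 1 + k * ΩRB * (C * y + D) = ΩRB * (ΩRB⁻¹ + a) := by
        rw [ha]; field_simp
      congr 1
      rw [hd, eq_div_iff (by positivity)]
      field_simp
    · have heq : (fun z => ΩRB⁻¹ * Real.exp (-(ΩRB⁻¹ * z)) * (c₀ * Real.exp (-(a * z))))
          = fun z => ΩRB⁻¹ * c₀ * Real.exp (-((ΩRB⁻¹ + a) * z)) := funext hptw
      rw [IntegrableOn, heq]
      have hin : IntegrableOn (fun z => Real.exp (-(ΩRB⁻¹ + a) * z)) (Ioi 0) :=
        exp_neg_integrableOn_Ioi 0 hb0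
      simp_rw [neg_mul] at hin
      exact hin.const_mul _
  -- outer integral
  set H : ℝ → ℝ := fun t => Real.exp χ₂ * Real.exp (-t) / (s * t) with hH
  clear_value H
  have houterptw : ∀ y : ℝ, ΩB⁻¹ * Real.exp (-(ΩB⁻¹ * y)) * (c₀ / (1 + k * ΩRB * (C * y + D)))
      = c₀ * ΩB⁻¹ * H (ΩB⁻¹ * y + χ₂) := by
    intro y
    simp only [hH]
    have hsx : s * (ΩB⁻¹ * y + χ₂) = 1 + k * ΩRB * D + k * ΩRB * C * y := by
      have : s * (ΩB⁻¹ * y + χ₂) = s * (ΩB⁻¹ * y) + s * χ₂ := by ring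
      rw [this, hχ₂s, hs]
      field_simp
      ring
    have hx2 : (1 : ℝ) + k * ΩRB * (C * y + D) = s * (ΩB⁻¹ * y + χ₂) := by
      rw [hsx]; ring
    rw [hx2, neg_add, Real.exp_add]
    have h1 : Real.exp χ₂ * Real.exp (-χ₂) = 1 := by
      rw [← Real.exp_add, add_neg_cancel, Real.exp_zero]
    linear_combination (-(c₀ * ΩB⁻¹ * Real.exp (-(ΩB⁻¹ * y)) / (s * (ΩB⁻¹ * y + χ₂)))) * h1
  have houter : ℙ {ω | gf (Y ω, Z ω) < X ω} = ENNReal.ofReal (c₀ * (χ₁ * Real.exp χ₂ * I)) := by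
    have houter1 := lintegral_expMeasure (inv_pos.mpr hΩB)
        (fun y => ∫⁻ z, expMeasure ΩR⁻¹ (Ioi (gf (y, z))) ∂(expMeasure ΩRB⁻¹))
        (fun y => c₀ / (1 + k * ΩRB * (C * y + D)))
        (fun y hy => hinner y hy)
        (fun y hy => by
          have h0 : (0:ℝ) < C * y + D := by nlinarith
          have h1 : 0 < 1 + k * ΩRB * (C * y + D) := by
            nlinarith [mul_pos (mul_pos hk0 hΩRB) h0]
          exact div_nonneg hc₀0.le h1.le)
        ?_
    · rw [hPE, houter1]
      congr 1
      calc (∫ y in Ioi 0, ΩB⁻¹ * Real.exp (-(ΩB⁻¹ * y)) * (c₀ / (1 + k * ΩRB * (C * y + D))))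
          = ∫ y in Ioi 0, c₀ * ΩB⁻¹ * H (ΩB⁻¹ * y + χ₂) := by
            exact integral_congr_ae (Filter.Eventually.of_forall fun y => houterptw y)
        _ = c₀ * ΩB⁻¹ * ∫ y in Ioi 0, H (ΩB⁻¹ * y + χ₂) := by rw [integral_const_mul]
        _ = c₀ * ΩB⁻¹ * ((ΩB⁻¹)⁻¹ * ∫ x in Ioi 0, H (x + χ₂)) := by
            have h := integral_comp_mul_left_Ioi (fun x => H (x + χ₂)) 0 (inv_pos.mpr hΩB)
            rw [mul_zero, smul_eq_mul] at h
            rw [h]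
        _ = c₀ * ∫ x in Ioi 0, H (x + χ₂) := by
            rw [inv_inv]
            field_simp
        _ = c₀ * ∫ t in Ioi (0 + χ₂), H t := by rw [integral_Ioi_comp_add_right]
        _ = c₀ * ∫ t in Ioi χ₂, (Real.exp χ₂ * s⁻¹) * (Real.exp (-t) / t) := by
            rw [zero_add]
            congr 1
            refine integral_congr_ae (Filter.Eventually.of_forall fun t => ?_)
            simp only [hH]
            ring
        _ = c₀ * (χ₁ * Real.exp χ₂ * I) := by
            rw [integral_const_mul, hI, hχ₁s]; ring
    · -- integrability of the outer integrand
      have hbound : Integrable (fun y => ΩB⁻¹ * c₀ * Real.exp (-(ΩB⁻¹ * y)))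
          (volume.restrict (Ioi 0)) := by
        have hin : IntegrableOn (fun y => Real.exp (-ΩB⁻¹ * y)) (Ioi 0) :=
          exp_neg_integrableOn_Ioi 0 (inv_pos.mpr hΩB)
        simp_rw [neg_mul] at hin
        exact hin.const_mul _
      refine Integrable.mono hbound ?_ ?_
      · apply Measurable.aestronglyMeasurable
        fun_prop
      · refine ae_restrict_of_forall_mem measurableSet_Ioi fun y hy => ?_
        have hy0 : (0:ℝ) < y := hy
        have hden : (1:ℝ) ≤ 1 + k * ΩRB * (C * y + D) := by
          nlinarith [mul_pos (mul_pos hk0 hΩRB) (show (0:ℝ) < C * y + D by nlinarith)]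
        have hd0 : (0:ℝ) < 1 + k * ΩRB * (C * y + D) := by linarith
        rw [Real.norm_eq_abs, Real.norm_eq_abs, abs_of_nonneg (by positivity),
          abs_of_nonneg (by positivity)]
        have h1 : c₀ / (1 + k * ΩRB * (C * y + D)) ≤ c₀ := by
          apply div_le_self hc₀0.le hden
        have h2 : 0 ≤ ΩB⁻¹ * Real.exp (-(ΩB⁻¹ * y)) := by positivity
        calc ΩB⁻¹ * Real.exp (-(ΩB⁻¹ * y)) * (c₀ / (1 + k * ΩRB * (C * y + D)))
            ≤ ΩB⁻¹ * Real.exp (-(ΩB⁻¹ * y)) * c₀ := by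
              exact mul_le_mul_of_nonneg_left h1 h2
          _ = ΩB⁻¹ * c₀ * Real.exp (-(ΩB⁻¹ * y)) := by ring
  -- combine
  have hχ₃eq : χ₃ = χ₂ - (k * Ωξ + k / snr) := by
    rw [hχ₃, chi3, ← hχ₂, hk]
    field_simp
    ring
  have hfinal : c₀ * (χ₁ * Real.exp χ₂ * I) = χ₁ * Real.exp χ₃ * I := by
    rw [hχ₃eq, Real.exp_sub, hc₀]
    rw [Real.exp_neg]
    field_simp
  have hPEfinal : ℙ {ω | gf (Y ω, Z ω) < X ω} = ENNReal.ofReal (χ₁ * Real.exp χ₃ * I) := by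
    rw [houter, hfinal]
  have hI0 : 0 ≤ I := by
    rw [hI]
    refine setIntegral_nonneg measurableSet_Ioi fun t ht => ?_
    have ht0 : 0 < t := lt_trans hχ₂0 ht
    positivity
  have hV0 : 0 ≤ χ₁ * Real.exp χ₃ * I := by positivity
  have hV1 : χ₁ * Real.exp χ₃ * I ≤ 1 := by
    refine ENNReal.ofReal_le_one.mp ?_
    rw [← hPEfinal]
    exact prob_le_one
  rw [hseteq, measure_compl hE (measure_ne_top _ _), measure_univ, hPEfinal,
    ← ENNReal.ofReal_one, ← ENNReal.ofReal_sub _ hV0, ENNReal.toReal_ofReal (by linarith)]
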